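/- arXiv:2503.05599 — 2 statements merged into one kernel-verified Lean document; each statement's English description precedes it below -/
import Mathlib

section
/- For every complex number t with |t| ≤ 1 and t ≠ 1, one has 2·Σ_{k=1}^∞ C(2k,k) C(4k,2k) (t/64)^k (2H_{4k} − H_{2k}) = −(Σ_{k=0}^∞ C(2k,k) C(4k,2k) (t/64)^k) · Log(1−t). -/
/-!
Let `a n` be the coefficients of `₂F₁(α, 1 - α; 1; t)`, so that
`a (n + 1) = (n + α) (n + 1 - α) / (n + 1)² · a n`, and let
`w n = ∑_{j < n} (1 / (j + α) + 1 / (j + 1 - α))`. The Cauchy product of `-log (1 - t) = ∑ tᵐ / m`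
with `∑ a n tⁿ` has coefficients `∑_{i=1}^n a (n - i) / i`, and these equal `a n · w n`: by
induction on `n`, the inductive step being a telescoping sum. For `α = 1/4` one has
`a n = C(2n,n) C(4n,2n) / 64ⁿ` and `w n = 2 (2 H_{4n} - H_{2n})`. On `‖t‖ = 1` neither series
converges absolutely, because `n · a n` increases from `a 1 = α (1 - α)`; there both `tsum`s
are `0`.
-/

/-- The `n`-th harmonic number `H_n = ∑_{j=1}^n 1/j`. -/
noncomputable def H (n : ℕ) : ℝ := ∑ j ∈ Finset.range n, (1 : ℝ) / (j + 1)

open Finset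

noncomputable def hypergeomCoeff (α : ℝ) (n : ℕ) : ℝ :=
  ordinaryHypergeometricCoefficient α (1 - α) 1 n

noncomputable def shiftedHarmonic (α : ℝ) (n : ℕ) : ℝ :=
  ∑ j ∈ range n, (1 / (j + α) + 1 / (j + 1 - α))

section

variable {α : ℝ}

@[simp]
lemma hypergeomCoeff_zero : hypergeomCoeff α 0 = 1 := by
  simp [hypergeomCoeff, ordinaryHypergeometricCoefficient]

lemma hypergeomCoeff_succ (n : ℕ) :
    hypergeomCoeff α (n + 1) = (n + α) * (n + 1 - α) / (n + 1) ^ 2 * hypergeomCoeff α n := by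
  simp only [hypergeomCoeff, ordinaryHypergeometricCoefficient, ascPochhammer_succ_eval,
    ascPochhammer_eval_one, Nat.factorial_succ]
  have : (n.factorial : ℝ) ≠ 0 := by positivity
  push_cast
  field_simp
  ring

@[simp]
lemma shiftedHarmonic_zero : shiftedHarmonic α 0 = 0 := by
  simp [shiftedHarmonic]

lemma shiftedHarmonic_succ (n : ℕ) :
    shiftedHarmonic α (n + 1) = shiftedHarmonic α n + 1 / (n + α) + 1 / (n + 1 - α) := by
  rw [shiftedHarmonic, sum_range_succ, ← add_assoc]
  rfl

lemma sum_hypergeomCoeff_div_add_two (n : ℕ) :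
    ∑ i ∈ range (n + 1), hypergeomCoeff α (n - i) / (i + 2) =
      (n + 1 + α) * (n + 2 - α) / (n + 2) ^ 2 *
          ∑ i ∈ range (n + 1), hypergeomCoeff α (n - i) / (i + 1) -
        (n + 1) ^ 2 * hypergeomCoeff α (n + 1) / (n + 2) ^ 2 := by
  -- `G` is the certificate produced by Gosper's algorithm.
  set G : ℕ → ℝ := fun i ↦
    ((n + 1 - i : ℕ) : ℝ) ^ 2 * hypergeomCoeff α (n + 1 - i) / ((i + 1) * (n + 2) ^ 2)
  have hterm : ∀ i ∈ range (n + 1), hypergeomCoeff α (n - i) / (i + 2) =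
      (n + 1 + α) * (n + 2 - α) / (n + 2) ^ 2 * (hypergeomCoeff α (n - i) / (i + 1)) +
        (G (i + 1) - G i) := by
    intro i hi
    obtain ⟨k, rfl⟩ : ∃ k, n = k + i := ⟨n - i, by grind⟩
    simp only [G, show k + i + 1 - i = k + 1 by omega, show k + i + 1 - (i + 1) = k by omega,
      show k + i - i = k by omega, hypergeomCoeff_succ]
    push_cast
    field_simp
    ring
  have hG : G (n + 1) = 0 := by simp [G]
  rw [sum_congr rfl hterm, sum_add_distrib, ← mul_sum, sum_range_sub, hG]
  simp only [G, tsub_zero, Nat.cast_add, Nat.cast_one, CharP.cast_eq_zero, zero_add, one_mul,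
    zero_sub]
  ring

lemma sum_hypergeomCoeff_div_add_one (hα0 : 0 < α) (hα1 : α < 1) (n : ℕ) :
    ∑ i ∈ range (n + 1), hypergeomCoeff α (n - i) / (i + 1) =
      hypergeomCoeff α (n + 1) * shiftedHarmonic α (n + 1) := by
  induction n with
  | zero =>
    simp only [zero_add, range_one, sum_singleton, hypergeomCoeff_succ, shiftedHarmonic_succ]
    field_simp [(sub_pos.2 hα1).ne']
    simp
  | succ n ih =>
    have h1 : (n + 1 + α : ℝ) ≠ 0 := by positivity
    have h2 : (n + 1 + 1 - α : ℝ) ≠ 0 := by linarith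
    have hshift : ∑ i ∈ range (n + 1), hypergeomCoeff α (n + 1 - (i + 1)) / ((i + 1 : ℕ) + 1) =
        ∑ i ∈ range (n + 1), hypergeomCoeff α (n - i) / (i + 2) :=
      sum_congr rfl fun i _ ↦ by rw [Nat.succ_sub_succ]; push_cast; ring
    rw [sum_range_succ', hshift, sum_hypergeomCoeff_div_add_two, ih, hypergeomCoeff_succ (n + 1),
      shiftedHarmonic_succ (n + 1)]
    push_cast
    field_simp
    ring

/-- The term `i = 0` is `a n / 0 = 0`, as in `Complex.hasSum_taylorSeries_neg_log`. -/
lemma sum_hypergeomCoeff_div (hα0 : 0 < α) (hα1 : α < 1) (n : ℕ) :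
    ∑ i ∈ range (n + 1), hypergeomCoeff α (n - i) / i =
      hypergeomCoeff α n * shiftedHarmonic α n := by
  cases n with
  | zero => simp
  | succ n =>
    rw [sum_range_succ', ← sum_hypergeomCoeff_div_add_one hα0 hα1]
    simp

lemma hypergeomCoeff_nonneg (hα0 : 0 ≤ α) (hα1 : α ≤ 1) (n : ℕ) : 0 ≤ hypergeomCoeff α n := by
  induction n with
  | zero => simp
  | succ n ih =>
    have : 0 ≤ (n + 1 - α : ℝ) := by linarith
    rw [hypergeomCoeff_succ]
    positivity

lemma hypergeomCoeff_le_one (hα0 : 0 ≤ α) (hα1 : α ≤ 1) (n : ℕ) : hypergeomCoeff α n ≤ 1 := by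
  induction n with
  | zero => simp
  | succ n ih =>
    have hpos : 0 ≤ (n + α) * (n + 1 - α) := by nlinarith
    have hfactor : (n + α) * (n + 1 - α) / (n + 1) ^ 2 ≤ 1 := by
      rw [div_le_one (by positivity)]
      nlinarith
    rw [hypergeomCoeff_succ]
    exact mul_le_one₀ hfactor (hypergeomCoeff_nonneg hα0 hα1 n) ih

lemma mul_one_sub_le_mul_hypergeomCoeff_succ (hα0 : 0 ≤ α) (hα1 : α ≤ 1) (n : ℕ) :
    α * (1 - α) ≤ (n + 1) * hypergeomCoeff α (n + 1) := by
  induction n with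
  | zero => simp [hypergeomCoeff_succ]
  | succ n ih =>
    have ha := hypergeomCoeff_nonneg hα0 hα1 (n + 1)
    have hstep : ((n : ℝ) + 1) * hypergeomCoeff α (n + 1) ≤
        ((n + 1 : ℕ) + 1) * hypergeomCoeff α (n + 1 + 1) := by
      have hfactor : (n : ℝ) + 1 ≤ (n + 1 + α) * (n + 1 + 1 - α) / (n + 1 + 1) := by
        rw [le_div_iff₀ (by positivity)]
        nlinarith
      rw [hypergeomCoeff_succ (n + 1)]
      push_cast
      calc ((n : ℝ) + 1) * hypergeomCoeff α (n + 1)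
          ≤ (n + 1 + α) * (n + 1 + 1 - α) / (n + 1 + 1) * hypergeomCoeff α (n + 1) :=
            mul_le_mul_of_nonneg_right hfactor ha
        _ = _ := by field_simp
    linarith

lemma not_summable_hypergeomCoeff (hα0 : 0 < α) (hα1 : α < 1) :
    ¬ Summable (hypergeomCoeff α) := by
  intro h
  have hc : 0 < α * (1 - α) := mul_pos hα0 (sub_pos.2 hα1)
  refine Real.not_summable_one_div_natCast ((summable_nat_add_iff 1).1 ?_)
  refine (((summable_nat_add_iff 1).2 h).div_const (α * (1 - α))).of_nonneg_of_le
    (fun n ↦ by positivity) fun n ↦ ?_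
  rw [div_le_div_iff₀ (by positivity) hc, Nat.cast_succ]
  linarith [mul_one_sub_le_mul_hypergeomCoeff_succ hα0.le hα1.le n]

lemma one_le_shiftedHarmonic_succ (hα0 : 0 < α) (hα1 : α < 1) (n : ℕ) :
    1 ≤ shiftedHarmonic α (n + 1) := by
  have hterm : ∀ j ∈ range (n + 1), 0 ≤ 1 / ((j : ℝ) + α) + 1 / (j + 1 - α) := fun j _ ↦ by
    have : 0 < (j + 1 - α : ℝ) := by linarith
    positivity
  calc (1 : ℝ) ≤ 1 / α + 1 / (1 - α) := by
        have : 0 < 1 - α := sub_pos.2 hα1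
        have : 1 ≤ 1 / α := by rw [le_div_iff₀ hα0]; linarith
        have : 0 ≤ 1 / (1 - α) := by positivity
        linarith
    _ ≤ shiftedHarmonic α (n + 1) := by
      simpa [shiftedHarmonic] using single_le_sum hterm (mem_range.2 n.succ_pos)

lemma not_summable_hypergeomCoeff_mul_shiftedHarmonic (hα0 : 0 < α) (hα1 : α < 1) :
    ¬ Summable fun n ↦ hypergeomCoeff α n * shiftedHarmonic α n := by
  intro h
  refine not_summable_hypergeomCoeff hα0 hα1 ((summable_nat_add_iff 1).1 ?_)
  refine ((summable_nat_add_iff 1).2 h).of_nonneg_of_le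
    (fun n ↦ hypergeomCoeff_nonneg hα0.le hα1.le _) fun n ↦ ?_
  exact le_mul_of_one_le_right (hypergeomCoeff_nonneg hα0.le hα1.le _)
    (one_le_shiftedHarmonic_succ hα0 hα1 n)

end

lemma summable_ofReal_mul_pow_iff {t : ℂ} (ht : ‖t‖ = 1) {b : ℕ → ℝ} :
    Summable (fun n ↦ (b n : ℂ) * t ^ n) ↔ Summable b := by
  rw [← summable_norm_iff]
  simpa [ht] using summable_abs_iff

theorem hasSum_hypergeomCoeff_mul_shiftedHarmonic {α : ℝ} (hα0 : 0 < α) (hα1 : α < 1) {t : ℂ}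
    (ht : ‖t‖ < 1) :
    HasSum (fun n ↦ ((hypergeomCoeff α n * shiftedHarmonic α n : ℝ) : ℂ) * t ^ n)
      (-Complex.log (1 - t) * ∑' n, (hypergeomCoeff α n : ℂ) * t ^ n) := by
  have hgeom := summable_geometric_of_lt_one (norm_nonneg t) ht
  have hlog : Summable fun m : ℕ ↦ ‖t ^ m / m‖ := hgeom.of_nonneg_of_le (fun _ ↦ norm_nonneg _)
    fun m ↦ by simpa using div_nat_le_self_of_nonnneg (pow_nonneg (norm_nonneg t) m) m
  have hcoeff : Summable fun n ↦ ‖(hypergeomCoeff α n : ℂ) * t ^ n‖ :=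
    hgeom.of_nonneg_of_le (fun _ ↦ norm_nonneg _) fun n ↦ by
      rw [norm_mul, norm_pow, Complex.norm_real, Real.norm_of_nonneg
        (hypergeomCoeff_nonneg hα0.le hα1.le n)]
      exact mul_le_of_le_one_left (by positivity) (hypergeomCoeff_le_one hα0.le hα1.le n)
  have h := hasSum_sum_range_mul_of_summable_norm hlog hcoeff
  rw [(Complex.hasSum_taylorSeries_neg_log ht).tsum_eq] at h
  suffices hterm : (fun n ↦ ((hypergeomCoeff α n * shiftedHarmonic α n : ℝ) : ℂ) * t ^ n) =
      fun n ↦ ∑ i ∈ range (n + 1), t ^ i / i * ((hypergeomCoeff α (n - i) : ℂ) * t ^ (n - i)) by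
    rwa [hterm]
  funext n
  rw [← sum_hypergeomCoeff_div hα0 hα1, Complex.ofReal_sum, sum_mul]
  refine sum_congr rfl fun i hi ↦ ?_
  rw [← pow_mul_pow_sub t (mem_range_succ_iff.1 hi)]
  push_cast
  ring

lemma hypergeomCoeff_quarter (k : ℕ) :
    hypergeomCoeff (1 / 4) k = k.centralBinom * (2 * k).centralBinom / 64 ^ k := by
  induction k with
  | zero => simp
  | succ k ih =>
    have hc (m : ℕ) : ((m : ℝ) + 1) * (m + 1).centralBinom = 2 * (2 * m + 1) * m.centralBinom := by
      exact_mod_cast Nat.succ_mul_centralBinom_succ m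
    have h1 : ((k + 1).centralBinom : ℝ) = 2 * (2 * k + 1) * k.centralBinom / (k + 1) := by
      rw [eq_div_iff (by positivity), mul_comm, hc]
    have h2 : ((2 * k + 1).centralBinom : ℝ) =
        2 * (4 * k + 1) * (2 * k).centralBinom / (2 * k + 1) := by
      have h := hc (2 * k)
      push_cast at h
      rw [eq_div_iff (by positivity)]
      linear_combination h
    have h3 : ((2 * (k + 1)).centralBinom : ℝ) =
        2 * (4 * k + 3) * (2 * k + 1).centralBinom / (2 * k + 2) := by
      have h := hc (2 * k + 1)
      push_cast at h
      rw [eq_div_iff (by positivity)]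
      linear_combination h
    rw [hypergeomCoeff_succ, ih, h1, h3, h2, pow_succ]
    field_simp
    ring

lemma ofReal_hypergeomCoeff_quarter_mul_pow (t : ℂ) (k : ℕ) :
    (hypergeomCoeff (1 / 4) k : ℂ) * t ^ k =
      (Nat.choose (2 * k) k : ℂ) * (Nat.choose (4 * k) (2 * k) : ℂ) * (t / 64) ^ k := by
  rw [hypergeomCoeff_quarter, show 4 * k = 2 * (2 * k) by ring,
    ← Nat.centralBinom_eq_two_mul_choose, ← Nat.centralBinom_eq_two_mul_choose, div_pow]
  push_cast
  field_simp

lemma shiftedHarmonic_quarter (n : ℕ) :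
    shiftedHarmonic (1 / 4) n = 2 * (2 * H (4 * n) - H (2 * n)) := by
  induction n with
  | zero => simp [H]
  | succ n ih =>
    rw [shiftedHarmonic_succ, show (n : ℝ) + 1 / 4 = (4 * n + 1) / 4 by ring,
      show (n : ℝ) + 1 - 1 / 4 = (4 * n + 3) / 4 by ring, one_div_div, one_div_div, ih,
      show 4 * (n + 1) = 4 * n + 1 + 1 + 1 + 1 by ring, show 2 * (n + 1) = 2 * n + 1 + 1 by ring]
    simp only [H, sum_range_succ]
    push_cast
    field_simp
    ring

theorem stmt_2_general (t : ℂ) (ht : ‖t‖ ≤ 1) :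
    2 * ∑' k : ℕ, ((Nat.choose (2 * (k + 1)) (k + 1) : ℂ)) *
        ((Nat.choose (4 * (k + 1)) (2 * (k + 1)) : ℂ)) * (t / 64) ^ (k + 1) *
        (2 * (H (4 * (k + 1)) : ℂ) - (H (2 * (k + 1)) : ℂ)) =
      -(∑' k : ℕ, ((Nat.choose (2 * k) k : ℂ)) * ((Nat.choose (4 * k) (2 * k) : ℂ)) *
          (t / 64) ^ k) * Complex.log (1 - t) := by
  set F : ℕ → ℂ := fun n ↦
    ((hypergeomCoeff (1 / 4) n * shiftedHarmonic (1 / 4) n : ℝ) : ℂ) * t ^ n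
  have hF0 : Function.support F ⊆ Set.range (· + 1) := fun n hn ↦
    Nat.exists_eq_succ_of_ne_zero (by rintro rfl; simp [F] at hn) |>.imp fun _ h ↦ h.symm
  have hterm (k : ℕ) : 2 * ((Nat.choose (2 * (k + 1)) (k + 1) : ℂ) *
      (Nat.choose (4 * (k + 1)) (2 * (k + 1)) : ℂ) * (t / 64) ^ (k + 1) *
      (2 * (H (4 * (k + 1)) : ℂ) - (H (2 * (k + 1)) : ℂ))) = F (k + 1) := by
    rw [← ofReal_hypergeomCoeff_quarter_mul_pow, ← mul_assoc]
    simp only [F, shiftedHarmonic_quarter]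
    push_cast
    ring
  rw [← tsum_mul_left, tsum_congr hterm, (add_left_injective 1).tsum_eq hF0,
    ← tsum_congr (ofReal_hypergeomCoeff_quarter_mul_pow t)]
  rcases ht.lt_or_eq with ht | ht
  · rw [(hasSum_hypergeomCoeff_mul_shiftedHarmonic (by norm_num) (by norm_num) ht).tsum_eq]
    ring
  · rw [tsum_eq_zero_of_not_summable, tsum_eq_zero_of_not_summable, neg_zero, zero_mul]
    · exact (summable_ofReal_mul_pow_iff ht).not.2
        (not_summable_hypergeomCoeff (by norm_num) (by norm_num))
    · exact (summable_ofReal_mul_pow_iff ht).not.2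
        (not_summable_hypergeomCoeff_mul_shiftedHarmonic (by norm_num) (by norm_num))

theorem stmt_2 (t : ℂ) (ht : ‖t‖ ≤ 1) (ht1 : t ≠ 1) :
    2 * ∑' k : ℕ, ((Nat.choose (2 * (k + 1)) (k + 1) : ℂ)) *
        ((Nat.choose (4 * (k + 1)) (2 * (k + 1)) : ℂ)) * (t / 64) ^ (k + 1) *
        (2 * (H (4 * (k + 1)) : ℂ) - (H (2 * (k + 1)) : ℂ)) =
      -(∑' k : ℕ, ((Nat.choose (2 * k) k : ℂ)) * ((Nat.choose (4 * k) (2 * k) : ℂ)) *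
          (t / 64) ^ k) * Complex.log (1 - t) :=
  stmt_2_general t ht
end

section
/- One has 4·Σ_{k=0}^∞ (C(2k,k)/4^k) · (2H_{2k} − H_k)/(2k+1) = 4π·log 2. -/
open Real Set MeasureTheory Interval

section PowerSeries

variable {b : ℕ → ℝ} {C : ℝ}

lemma summable_succ_mul_pow {r : ℝ} (hr : |r| < 1) :
    Summable fun k : ℕ => ((k : ℝ) + 1) * r ^ k := by
  have h := summable_pow_mul_geometric_of_norm_lt_one (R := ℝ) 1 (r := r) hr
  simpa [add_mul] using h.add (summable_geometric_of_abs_lt_one hr)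

lemma summable_succ_mul_mul_pow_pred {r : ℝ} (hr : |r| < 1) :
    Summable fun k : ℕ => ((k : ℝ) + 1) * k * r ^ (k - 1) := by
  rw [← summable_nat_add_iff 1]
  have h2 := summable_pow_mul_geometric_of_norm_lt_one (R := ℝ) 2 (r := r) hr
  have h1 := summable_pow_mul_geometric_of_norm_lt_one (R := ℝ) 1 (r := r) hr
  refine ((h2.add (h1.mul_left 3)).add ((summable_geometric_of_abs_lt_one hr).mul_left 2)).congr
    fun k => ?_
  simp only [Nat.add_sub_cancel, Nat.cast_add, Nat.cast_one]
  ring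

lemma summable_mul_pow (hb : ∀ k, |b k| ≤ C * (k + 1)) {x : ℝ} (hx : |x| < 1) :
    Summable fun k => b k * x ^ k := by
  refine .of_norm_bounded ((summable_succ_mul_pow (r := |x|) (by rwa [abs_abs])).mul_left C)
    fun k => ?_
  rw [norm_mul, norm_pow, Real.norm_eq_abs, Real.norm_eq_abs, ← mul_assoc]
  exact mul_le_mul_of_nonneg_right (hb k) (by positivity)

lemma norm_mul_deriv_pow_le (hb : ∀ k, |b k| ≤ C * (k + 1)) {x r : ℝ} (hxr : |x| ≤ r) (k : ℕ) :
    ‖b k * (k * x ^ (k - 1))‖ ≤ C * (((k : ℝ) + 1) * k * r ^ (k - 1)) := by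
  rw [norm_mul, norm_mul, norm_pow, Real.norm_eq_abs, Real.norm_eq_abs, Real.norm_eq_abs,
    Nat.abs_cast]
  calc |b k| * (k * |x| ^ (k - 1)) ≤ C * (k + 1) * (k * r ^ (k - 1)) :=
        mul_le_mul (hb k) (mul_le_mul_of_nonneg_left (pow_le_pow_left₀ (abs_nonneg x) hxr _)
          (Nat.cast_nonneg k)) (by positivity) ((abs_nonneg _).trans (hb k))
    _ = C * ((k + 1) * k * r ^ (k - 1)) := by ring

lemma hasDerivAt_tsum_mul_pow (hb : ∀ k, |b k| ≤ C * (k + 1)) {x : ℝ} (hx : |x| < 1) :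
    HasDerivAt (fun y => ∑' k, b k * y ^ k) (∑' k, b k * (k * x ^ (k - 1))) x := by
  obtain ⟨r, hxr, hr1⟩ := exists_between hx
  have hr : |r| < 1 := by rwa [abs_of_pos ((abs_nonneg x).trans_lt hxr)]
  refine hasDerivAt_tsum_of_isPreconnected ((summable_succ_mul_mul_pow_pred hr).mul_left C)
    isOpen_Ioo (convex_Ioo (-r) r).isPreconnected
    (fun k y _ => by simpa using (hasDerivAt_pow k y).const_mul (b k))
    (fun k y hy => norm_mul_deriv_pow_le hb (abs_le.2 ⟨hy.1.le, hy.2.le⟩) k)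
    (y₀ := 0) ?_ (summable_mul_pow hb (by simp)) (abs_lt.1 hxr)
  have hr0 : 0 < r := (abs_nonneg x).trans_lt hxr
  exact ⟨neg_lt_zero.2 hr0, hr0⟩

lemma tsum_mul_zero_pow (b : ℕ → ℝ) : ∑' k, b k * (0 : ℝ) ^ k = b 0 := by
  rw [tsum_eq_single 0 (fun k hk => by simp [hk])]
  simp

lemma two_mul_one_sub_mul_tsum_deriv_sub (hb : ∀ k, |b k| ≤ C * (k + 1)) {x : ℝ} (hx : |x| < 1) :
    2 * (1 - x) * (∑' k, b k * (k * x ^ (k - 1))) - ∑' k, b k * x ^ k =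
      ∑' k, (2 * (k + 1) * b (k + 1) - (2 * k + 1) * b k) * x ^ k := by
  have hD : Summable fun k => b k * (k * x ^ (k - 1)) :=
    .of_norm_bounded ((summable_succ_mul_mul_pow_pred (r := |x|) (by rwa [abs_abs])).mul_left C)
      (norm_mul_deriv_pow_le hb le_rfl)
  have hshift :
      HasSum (fun k => b (k + 1) * ((k + 1) * x ^ k)) (∑' k, b k * (k * x ^ (k - 1))) := by
    rw [hD.tsum_eq_zero_add]
    simpa using ((summable_nat_add_iff 1).2 hD).hasSum
  have h := ((hshift.mul_left 2).sub ((hD.hasSum.mul_right x).mul_left 2)).sub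
    (summable_mul_pow hb hx).hasSum
  rw [show ∀ D S : ℝ, 2 * (1 - x) * D - S = 2 * D - 2 * (D * x) - S by intros; ring, ← h.tsum_eq]
  refine tsum_congr fun k => ?_
  cases k <;> simp [pow_succ]; ring

end PowerSeries

lemma eq_of_forall_hasDerivAt_zero {F : ℝ → ℝ} {a b x y : ℝ}
    (hF : ∀ z ∈ Ioo a b, HasDerivAt F 0 z) (hx : x ∈ Ioo a b) (hy : y ∈ Ioo a b) : F x = F y :=
  isOpen_Ioo.is_const_of_deriv_eq_zero isPreconnected_Ioo
    (fun z hz => (hF z hz).differentiableAt.differentiableWithinAt) (fun z hz => (hF z hz).deriv)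
    hx hy

lemma HasDerivAt.mul_sqrt_one_sub {F : ℝ → ℝ} {F' x : ℝ} (hF : HasDerivAt F F' x) (hx : x < 1) :
    HasDerivAt (fun y => F y * √(1 - y)) ((2 * (1 - x) * F' - F x) / (2 * √(1 - x))) x := by
  have hx' : 0 < 1 - x := by linarith
  have hs : 0 < √(1 - x) := sqrt_pos.2 hx'
  refine (hF.mul (((hasDerivAt_id' x).const_sub 1).sqrt hx'.ne')).congr_deriv ?_
  field_simp
  rw [sq_sqrt hx'.le]
  ring

lemma H_succ (n : ℕ) : H (n + 1) = H n + 1 / (n + 1) := by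
  simp [H, Finset.sum_range_succ]

lemma H_mono : Monotone H := fun _ _ hmn =>
  Finset.sum_le_sum_of_subset_of_nonneg (Finset.range_mono hmn) fun _ _ _ => by positivity

lemma H_nonneg (n : ℕ) : 0 ≤ H n := Finset.sum_nonneg fun _ _ => by positivity

lemma H_le_self (n : ℕ) : H n ≤ n := by
  simpa [H] using Finset.sum_le_card_nsmul (Finset.range n) _ 1 fun j _ =>
    (div_le_one (by positivity)).2 (by simp : (1 : ℝ) ≤ j + 1)

lemma two_mul_H_two_mul_sub_H_nonneg (k : ℕ) : 0 ≤ 2 * H (2 * k) - H k := by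
  linarith [H_mono (by omega : k ≤ 2 * k), H_nonneg k]

lemma two_mul_H_two_mul_sub_H_le (k : ℕ) : 2 * H (2 * k) - H k ≤ 4 * k := by
  have := H_le_self (2 * k)
  push_cast at this
  linarith [H_nonneg k]

lemma two_mul_H_two_mul_succ_sub_H_succ (k : ℕ) :
    2 * H (2 * (k + 1)) - H (k + 1) = 2 * H (2 * k) - H k + 2 / (2 * k + 1) := by
  rw [show 2 * (k + 1) = 2 * k + 1 + 1 by ring, H_succ, H_succ, H_succ]
  push_cast
  field_simp
  ring

noncomputable def centralCoeff (k : ℕ) : ℝ := (Nat.centralBinom k : ℝ) / 4 ^ k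

noncomputable def harmonicCoeff (k : ℕ) : ℝ := centralCoeff k * (2 * H (2 * k) - H k)

lemma centralCoeff_pos (k : ℕ) : 0 < centralCoeff k := by
  have := Nat.centralBinom_pos k
  unfold centralCoeff
  positivity

lemma centralCoeff_le_one (k : ℕ) : centralCoeff k ≤ 1 := by
  rw [centralCoeff, div_le_one (by positivity)]
  exact_mod_cast (Nat.choose_le_two_pow _ _).trans_eq (by rw [pow_mul]; norm_num)

@[simp] lemma centralCoeff_zero : centralCoeff 0 = 1 := by simp [centralCoeff]

lemma abs_centralCoeff_le (k : ℕ) : |centralCoeff k| ≤ 1 * (k + 1) := by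
  rw [abs_of_pos (centralCoeff_pos k)]
  linarith [centralCoeff_le_one k, (Nat.cast_nonneg k : (0 : ℝ) ≤ k)]

lemma two_mul_succ_mul_centralCoeff_succ (k : ℕ) :
    2 * ((k : ℝ) + 1) * centralCoeff (k + 1) = (2 * k + 1) * centralCoeff k := by
  have h : ((k : ℝ) + 1) * Nat.centralBinom (k + 1) = 2 * (2 * k + 1) * Nat.centralBinom k := by
    exact_mod_cast Nat.succ_mul_centralBinom_succ k
  simp only [centralCoeff, pow_succ]
  field_simp
  linear_combination 2 * h

lemma harmonicCoeff_nonneg (k : ℕ) : 0 ≤ harmonicCoeff k :=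
  mul_nonneg (centralCoeff_pos k).le (two_mul_H_two_mul_sub_H_nonneg k)

lemma abs_harmonicCoeff_le (k : ℕ) : |harmonicCoeff k| ≤ 4 * (k + 1) := by
  rw [abs_of_nonneg (harmonicCoeff_nonneg k)]
  calc harmonicCoeff k ≤ 1 * (4 * k) :=
        mul_le_mul (centralCoeff_le_one k) (two_mul_H_two_mul_sub_H_le k)
          (two_mul_H_two_mul_sub_H_nonneg k) zero_le_one
    _ ≤ 4 * (k + 1) := by linarith

@[simp] lemma harmonicCoeff_zero : harmonicCoeff 0 = 0 := by simp [harmonicCoeff, H]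

lemma two_mul_succ_mul_harmonicCoeff_succ (k : ℕ) :
    2 * ((k : ℝ) + 1) * harmonicCoeff (k + 1) =
      (2 * k + 1) * harmonicCoeff k + 2 * centralCoeff k := by
  have hc := two_mul_succ_mul_centralCoeff_succ k
  have hk : (2 * k + 1 : ℝ) ≠ 0 := by positivity
  rw [harmonicCoeff, harmonicCoeff, two_mul_H_two_mul_succ_sub_H_succ]
  field_simp
  linear_combination ((2 * H (2 * k) - H k) * (2 * k + 1) + 2) * hc

lemma tsum_centralCoeff_mul_pow_mul_sqrt {x : ℝ} (hx : |x| < 1) :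
    (∑' k, centralCoeff k * x ^ k) * √(1 - x) = 1 := by
  have hF : ∀ y ∈ Ioo (-1 : ℝ) 1,
      HasDerivAt (fun y => (∑' k, centralCoeff k * y ^ k) * √(1 - y)) 0 y := by
    intro y hy
    have hy' : |y| < 1 := abs_lt.2 hy
    refine ((hasDerivAt_tsum_mul_pow abs_centralCoeff_le hy').mul_sqrt_one_sub hy.2).congr_deriv
      ?_
    rw [two_mul_one_sub_mul_tsum_deriv_sub abs_centralCoeff_le hy']
    simp [two_mul_succ_mul_centralCoeff_succ]
  simpa [tsum_mul_zero_pow] using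
    eq_of_forall_hasDerivAt_zero hF (abs_lt.1 hx) (by norm_num : (0 : ℝ) ∈ Ioo (-1) 1)

lemma hasSum_harmonicCoeff_mul_pow {x : ℝ} (hx : |x| < 1) :
    HasSum (fun k => harmonicCoeff k * x ^ k) (-log (1 - x) / √(1 - x)) := by
  have hF : ∀ y ∈ Ioo (-1 : ℝ) 1,
      HasDerivAt (fun y => (∑' k, harmonicCoeff k * y ^ k) * √(1 - y) + log (1 - y)) 0 y := by
    intro y hy
    have hy' : |y| < 1 := abs_lt.2 hy
    have h1 : 0 < 1 - y := by linarith [hy.2]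
    refine (((hasDerivAt_tsum_mul_pow abs_harmonicCoeff_le hy').mul_sqrt_one_sub hy.2).add
      (((hasDerivAt_id' y).const_sub 1).log h1.ne')).congr_deriv ?_
    rw [two_mul_one_sub_mul_tsum_deriv_sub abs_harmonicCoeff_le hy']
    have hterm : ∀ k : ℕ, (2 * (k + 1) * harmonicCoeff (k + 1) - (2 * k + 1) * harmonicCoeff k)
        * y ^ k = 2 * (centralCoeff k * y ^ k) := fun k => by
      rw [two_mul_succ_mul_harmonicCoeff_succ]; ring
    rw [tsum_congr hterm, tsum_mul_left]
    have hs : 0 < √(1 - y) := sqrt_pos.2 h1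
    field_simp
    linear_combination √(1 - y) * tsum_centralCoeff_mul_pow_mul_sqrt hy' -
      (∑' k, centralCoeff k * y ^ k) * sq_sqrt h1.le
  have := eq_of_forall_hasDerivAt_zero hF (abs_lt.1 hx) (by norm_num : (0 : ℝ) ∈ Ioo (-1) 1)
  simp only [tsum_mul_zero_pow, harmonicCoeff_zero, sub_zero, sqrt_one, log_one, mul_one,
    add_zero] at this
  have hs : 0 < √(1 - x) := sqrt_pos.2 (by linarith [(abs_lt.1 hx).2])
  rw [← eq_div_of_mul_eq hs.ne' (eq_neg_of_add_eq_zero_left this)]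
  exact (summable_mul_pow abs_harmonicCoeff_le hx).hasSum

lemma integral_sin_pow_two_mul_mul_cos (k : ℕ) :
    ∫ t in 0..π / 2, sin t ^ (2 * k) * cos t = 1 / (2 * k + 1) := by
  have h := integral_sin_pow_mul_cos_pow_odd (a := 0) (b := π / 2) (2 * k) 0
  simp only [mul_zero, zero_add, pow_one, pow_zero, mul_one, sin_zero, sin_pi_div_two] at h
  rw [h, integral_pow]
  norm_num

lemma integral_log_cos_zero_pi_div_two : ∫ t in 0..π / 2, log (cos t) = -log 2 * π / 2 := by
  rw [← integral_log_sin_zero_pi_div_two]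
  simpa [sin_pi_div_two_sub] using intervalIntegral.integral_comp_sub_left (a := 0) (b := π / 2)
    (fun t => log (sin t)) (π / 2)

lemma hasSum_harmonicCoeff_mul_sin_pow_mul_cos {θ : ℝ} (hθ : θ ∈ Ioo (-(π / 2)) (π / 2)) :
    HasSum (fun k => harmonicCoeff k * (sin θ ^ (2 * k) * cos θ)) (-2 * log (cos θ)) := by
  have hc : 0 < cos θ := cos_pos_of_mem_Ioo hθ
  have hx : |sin θ ^ 2| < 1 := by
    rw [abs_of_nonneg (sq_nonneg _)]
    nlinarith [sin_sq_add_cos_sq θ]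
  have hsum : (fun k => harmonicCoeff k * (sin θ ^ (2 * k) * cos θ)) =
      fun k => harmonicCoeff k * (sin θ ^ 2) ^ k * cos θ := by
    funext k
    rw [pow_mul]
    ring
  have hval : -2 * log (cos θ) = -log (1 - sin θ ^ 2) / √(1 - sin θ ^ 2) * cos θ := by
    rw [← cos_sq', sqrt_sq hc.le, log_pow]
    field_simp
    push_cast
    ring
  rw [hsum, hval]
  exact (hasSum_harmonicCoeff_mul_pow hx).mul_right (cos θ)

lemma hasSum_harmonicCoeff_div : HasSum (fun k => harmonicCoeff k / (2 * k + 1)) (π * log 2) := by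
  -- `Ι 0 (π / 2) = Ioc 0 (π / 2)`, and the endpoint `π / 2`, where `cos` vanishes, is null.
  have hmem : ∀ {P : ℝ → Prop}, (∀ t ∈ Ioo 0 (π / 2), P t) → ∀ᵐ t, t ∈ Ι 0 (π / 2) → P t := by
    intro P h
    filter_upwards [Measure.ae_ne volume (π / 2)] with t hne ht
    rw [uIoc_of_le (by positivity)] at ht
    exact h t ⟨ht.1, ht.2.lt_of_ne hne⟩
  have hsum : ∀ t ∈ Ioo 0 (π / 2),
      HasSum (fun k => harmonicCoeff k * (sin t ^ (2 * k) * cos t)) (-2 * log (cos t)) :=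
    fun t ht => hasSum_harmonicCoeff_mul_sin_pow_mul_cos ⟨by linarith [ht.1, pi_pos], ht.2⟩
  have hnonneg : ∀ t ∈ Ioo 0 (π / 2), ∀ k, 0 ≤ harmonicCoeff k * (sin t ^ (2 * k) * cos t) :=
    fun t ht k => mul_nonneg (harmonicCoeff_nonneg k) (mul_nonneg ((even_two_mul k).pow_nonneg _)
      (cos_pos_of_mem_Ioo ⟨by linarith [ht.1, pi_pos], ht.2⟩).le)
  have h := intervalIntegral.hasSum_integral_of_dominated_convergence
    (fun k t => harmonicCoeff k * (sin t ^ (2 * k) * cos t)) (f := fun t => -2 * log (cos t))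
    (fun k => (by fun_prop : Continuous _).aestronglyMeasurable)
    (fun k => hmem fun t ht => (norm_of_nonneg (hnonneg t ht k)).le)
    (hmem fun t ht => (hsum t ht).summable)
    ((intervalIntegrable_log_cos.const_mul (-2)).congr_uIoo fun t ht =>
      ((hsum t (by rwa [uIoo_of_le (by positivity)] at ht)).tsum_eq).symm)
    (hmem hsum)
  simp only [intervalIntegral.integral_const_mul, integral_sin_pow_two_mul_mul_cos,
    integral_log_cos_zero_pi_div_two, mul_one_div] at h
  rwa [show -2 * (-log 2 * π / 2) = π * log 2 by ring] at h

theorem stmt_7 :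
    4 * ∑' k : ℕ, ((Nat.choose (2 * k) k : ℝ) / 4 ^ k) *
        (2 * H (2 * k) - H k) / (2 * (k : ℝ) + 1) =
      4 * Real.pi * Real.log 2 := by
  change 4 * ∑' k : ℕ, harmonicCoeff k / (2 * (k : ℝ) + 1) = _
  rw [hasSum_harmonicCoeff_div.tsum_eq]
  ring
end
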